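/- Let Ω ⊆ ℝ² be open with x > 0 at every point (x,y) ∈ Ω, let a ∈ ℝ, and let v, w, q : Ω → ℝ be C² with v > 0 on Ω (subscripts denote partial derivatives). If (v, w, q) satisfies on Ω the system: w_xx + w_yy − w_x/x = −2(v_x w_x + v_y w_y)/v; v_xx + v_yy + v_x/x = (v_x² + v_y²)/v − v³(w_x² + w_y²)/x²; q_x = −v_x/v + (x/(2v²))(v_x² − v_y²) − (v²/(2x))(w_x² − w_y²); q_y = −v_y/v + x v_x v_y/v² − v² w_x w_y/x; and v_x w_x + v_y w_y = 0, then the rescaled triple (e^{−a}·v, e^{a}·w, q) satisfies the same system on Ω, and wherever w_y ≠ 0 the first-integral expression x²v_x²/(v²w_y²) + v² evaluated on the rescaled pair equals e^{−2a} times its value on (v, w). -/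
import Mathlib


/-- Partial derivative with respect to the first coordinate of `ℝ × ℝ`. -/
noncomputable def pdx (f : ℝ × ℝ → ℝ) (p : ℝ × ℝ) : ℝ := fderiv ℝ f p (1, 0)

/-- Partial derivative with respect to the second coordinate of `ℝ × ℝ`. -/
noncomputable def pdy (f : ℝ × ℝ → ℝ) (p : ℝ × ℝ) : ℝ := fderiv ℝ f p (0, 1)

lemma pdx_const_mul (c : ℝ) (hc : c ≠ 0) (f : ℝ × ℝ → ℝ) :
    pdx (fun p => c * f p) = fun p => c * pdx f p := by
  funext p
  by_cases h : DifferentiableAt ℝ f p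
  · simp [pdx, fderiv_const_mul h]
  · have h' : ¬ DifferentiableAt ℝ (fun p => c * f p) p := by
      intro h'
      have := h'.const_mul c⁻¹
      simp [inv_mul_cancel_left₀ hc] at this
      exact h this
    simp [pdx, fderiv_zero_of_not_differentiableAt h, fderiv_zero_of_not_differentiableAt h']

lemma pdy_const_mul (c : ℝ) (hc : c ≠ 0) (f : ℝ × ℝ → ℝ) :
    pdy (fun p => c * f p) = fun p => c * pdy f p := by
  funext p
  by_cases h : DifferentiableAt ℝ f p
  · simp [pdy, fderiv_const_mul h]
  · have h' : ¬ DifferentiableAt ℝ (fun p => c * f p) p := by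
      intro h'
      have := h'.const_mul c⁻¹
      simp [inv_mul_cancel_left₀ hc] at this
      exact h this
    simp [pdy, fderiv_zero_of_not_differentiableAt h, fderiv_zero_of_not_differentiableAt h']

/-- **The scaling symmetry `S_a` of the Papapetrou system.**  If `(v, w, q)`
solves the reduced vacuum Einstein equations together with Papapetrou's
condition on `Ω ⊆ {x > 0}`, then so does the rescaled triple
`(e^{-a} v, e^{a} w, q)`, and wherever `w_y ≠ 0` the first integral
`x²v_x²/(v²w_y²) + v²` of the rescaled pair equals `e^{-2a}` times its value
on `(v, w)`. -/
theorem papapetrou_scaling_symmetry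
    (Ω : Set (ℝ × ℝ)) (hΩ : IsOpen Ω) (hx : ∀ p ∈ Ω, 0 < p.1)
    (a : ℝ) (v w q : ℝ × ℝ → ℝ)
    (hv : ContDiffOn ℝ 2 v Ω) (hw : ContDiffOn ℝ 2 w Ω) (hq : ContDiffOn ℝ 2 q Ω)
    (hvpos : ∀ p ∈ Ω, 0 < v p)
    (heq1 : ∀ p ∈ Ω,
      pdx (pdx w) p + pdy (pdy w) p - pdx w p / p.1 =
        -2 * (pdx v p * pdx w p + pdy v p * pdy w p) / v p)
    (heq2 : ∀ p ∈ Ω,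
      pdx (pdx v) p + pdy (pdy v) p + pdx v p / p.1 =
        ((pdx v p) ^ 2 + (pdy v p) ^ 2) / v p -
          (v p) ^ 3 * ((pdx w p) ^ 2 + (pdy w p) ^ 2) / p.1 ^ 2)
    (heq3 : ∀ p ∈ Ω,
      pdx q p = -pdx v p / v p + (p.1 / (2 * (v p) ^ 2)) * ((pdx v p) ^ 2 - (pdy v p) ^ 2)
        - ((v p) ^ 2 / (2 * p.1)) * ((pdx w p) ^ 2 - (pdy w p) ^ 2))
    (heq4 : ∀ p ∈ Ω,
      pdy q p = -pdy v p / v p + p.1 * pdx v p * pdy v p / (v p) ^ 2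
        - (v p) ^ 2 * pdx w p * pdy w p / p.1)
    (heq5 : ∀ p ∈ Ω, pdx v p * pdx w p + pdy v p * pdy w p = 0)
    (v' w' : ℝ × ℝ → ℝ)
    (hv' : ∀ p : ℝ × ℝ, v' p = Real.exp (-a) * v p)
    (hw' : ∀ p : ℝ × ℝ, w' p = Real.exp a * w p) :
    (∀ p ∈ Ω,
      (pdx (pdx w') p + pdy (pdy w') p - pdx w' p / p.1 =
        -2 * (pdx v' p * pdx w' p + pdy v' p * pdy w' p) / v' p) ∧
      (pdx (pdx v') p + pdy (pdy v') p + pdx v' p / p.1 =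
        ((pdx v' p) ^ 2 + (pdy v' p) ^ 2) / v' p -
          (v' p) ^ 3 * ((pdx w' p) ^ 2 + (pdy w' p) ^ 2) / p.1 ^ 2) ∧
      (pdx q p = -pdx v' p / v' p
        + (p.1 / (2 * (v' p) ^ 2)) * ((pdx v' p) ^ 2 - (pdy v' p) ^ 2)
        - ((v' p) ^ 2 / (2 * p.1)) * ((pdx w' p) ^ 2 - (pdy w' p) ^ 2)) ∧
      (pdy q p = -pdy v' p / v' p + p.1 * pdx v' p * pdy v' p / (v' p) ^ 2
        - (v' p) ^ 2 * pdx w' p * pdy w' p / p.1) ∧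
      (pdx v' p * pdx w' p + pdy v' p * pdy w' p = 0)) ∧
    ∀ p ∈ Ω, pdy w p ≠ 0 →
      p.1 ^ 2 * (pdx v' p) ^ 2 / ((v' p) ^ 2 * (pdy w' p) ^ 2) + (v' p) ^ 2 =
        Real.exp (-2 * a) *
          (p.1 ^ 2 * (pdx v p) ^ 2 / ((v p) ^ 2 * (pdy w p) ^ 2) + (v p) ^ 2) := by
  have hE : Real.exp a ≠ 0 := Real.exp_ne_zero a
  have hV : v' = fun p => Real.exp (-a) * v p := funext hv'
  have hW : w' = fun p => Real.exp a * w p := funext hw'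
  have hc : Real.exp (-a) ≠ 0 := Real.exp_ne_zero _
  have hvx : pdx v' = fun p => Real.exp (-a) * pdx v p := by rw [hV, pdx_const_mul _ hc]
  have hvy : pdy v' = fun p => Real.exp (-a) * pdy v p := by rw [hV, pdy_const_mul _ hc]
  have hwx : pdx w' = fun p => Real.exp a * pdx w p := by rw [hW, pdx_const_mul _ hE]
  have hwy : pdy w' = fun p => Real.exp a * pdy w p := by rw [hW, pdy_const_mul _ hE]
  have hvxx : pdx (pdx v') = fun p => Real.exp (-a) * pdx (pdx v) p := by
    rw [hvx, pdx_const_mul _ hc]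
  have hvyy : pdy (pdy v') = fun p => Real.exp (-a) * pdy (pdy v) p := by
    rw [hvy, pdy_const_mul _ hc]
  have hwxx : pdx (pdx w') = fun p => Real.exp a * pdx (pdx w) p := by
    rw [hwx, pdx_const_mul _ hE]
  have hwyy : pdy (pdy w') = fun p => Real.exp a * pdy (pdy w) p := by
    rw [hwy, pdy_const_mul _ hE]
  constructor
  · intro p hp
    have hx0 : p.1 ≠ 0 := (hx p hp).ne'
    have hv0 : v p ≠ 0 := (hvpos p hp).ne'
    have h1 := heq1 p hp
    have h2 := heq2 p hp
    have h3 := heq3 p hp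
    have h4 := heq4 p hp
    have h5 := heq5 p hp
    rw [hwxx, hwyy, hvxx, hvyy, hvx, hvy, hwx, hwy]
    simp only [hv', hw', Real.exp_neg]
    set E := Real.exp a with hEdef
    set X := p.1
    set V := v p
    set Vx := pdx v p
    set Vy := pdy v p
    set Wx := pdx w p
    set Wy := pdy w p
    set Vxx := pdx (pdx v) p
    set Vyy := pdy (pdy v) p
    set Wxx := pdx (pdx w) p
    set Wyy := pdy (pdy w) p
    refine ⟨?_, ?_, ?_, ?_, ?_⟩
    · have e1 : -2 * (E⁻¹ * Vx * (E * Wx) + E⁻¹ * Vy * (E * Wy)) / (E⁻¹ * V)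
          = E * (-2 * (Vx * Wx + Vy * Wy) / V) := by
        field_simp
      rw [e1, ← h1]; ring
    · have e2 : ((E⁻¹ * Vx) ^ 2 + (E⁻¹ * Vy) ^ 2) / (E⁻¹ * V)
          - (E⁻¹ * V) ^ 3 * ((E * Wx) ^ 2 + (E * Wy) ^ 2) / X ^ 2
          = E⁻¹ * ((Vx ^ 2 + Vy ^ 2) / V - V ^ 3 * (Wx ^ 2 + Wy ^ 2) / X ^ 2) := by
        field_simp
      rw [e2, ← h2]; ring
    · have e3 : -(E⁻¹ * Vx) / (E⁻¹ * V)
          + X / (2 * (E⁻¹ * V) ^ 2) * ((E⁻¹ * Vx) ^ 2 - (E⁻¹ * Vy) ^ 2)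
          - (E⁻¹ * V) ^ 2 / (2 * X) * ((E * Wx) ^ 2 - (E * Wy) ^ 2)
          = -Vx / V + X / (2 * V ^ 2) * (Vx ^ 2 - Vy ^ 2)
            - V ^ 2 / (2 * X) * (Wx ^ 2 - Wy ^ 2) := by
        field_simp
      rw [e3]; exact h3
    · have e4 : -(E⁻¹ * Vy) / (E⁻¹ * V) + X * (E⁻¹ * Vx) * (E⁻¹ * Vy) / (E⁻¹ * V) ^ 2
          - (E⁻¹ * V) ^ 2 * (E * Wx) * (E * Wy) / X
          = -Vy / V + X * Vx * Vy / V ^ 2 - V ^ 2 * Wx * Wy / X := by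
        field_simp
      rw [e4]; exact h4
    · have e5 : E⁻¹ * Vx * (E * Wx) + E⁻¹ * Vy * (E * Wy)
          = E⁻¹ * E * (Vx * Wx + Vy * Wy) := by ring
      rw [e5, h5, mul_zero]
  · intro p hp hWy
    have hv0 : v p ≠ 0 := (hvpos p hp).ne'
    have hE2 : Real.exp (-2 * a) = ((Real.exp a)⁻¹) ^ 2 := by
      rw [show (-2 : ℝ) * a = -(a + a) by ring, Real.exp_neg, Real.exp_add, mul_inv]
      ring
    simp only [hvx, hvy, hwy, hv', Real.exp_neg, hE2]
    field_simp
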